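/- arXiv:2011.06688 — 2 statements merged into one kernel-verified Lean document; each statement's English description precedes it below -/
import Mathlib

section
/- Let A ∈ ℝ^{m×n}, b ∈ ℝ^m, and suppose A x_⋆ = b. Fix x ∈ ℝ^n and a nonempty sample τ ⊆ {1,…,m}. Set δ = max_{j∈τ} (b_j − A_j x)², let t ∈ τ be an index attaining this maximum, and define the BSKM1 index set I = {h ∈ {1,…,m}∖τ : (b_h − A_h x)² ≥ δ} ∪ {t}. If A_I ≠ 0 and x₊ = P_{S_I}(x) is the orthogonal projection of x onto S_I = {y : A_I y = b_I}, then ‖x₊ − x_⋆‖₂² ≤ ‖x − x_⋆‖₂² − |I|·δ / λ_max(A_Iᵀ A_I). -/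
open Matrix Finset

noncomputable def lambdaMax {N : Type*} [Fintype N] [DecidableEq N]
    {M : Matrix N N ℝ} (hM : M.IsHermitian) : ℝ := ⨆ i, hM.eigenvalues i

/-- The row submatrix `A_I` of `A` with rows indexed by the finite set `I`. -/
def rowSub {m n : ℕ} (A : Matrix (Fin m) (Fin n) ℝ) (I : Finset (Fin m)) :
    Matrix {i // i ∈ I} (Fin n) ℝ := A.submatrix Subtype.val id

/-- The Gram matrix `A_Iᵀ * A_I`. -/
def gram {m n : ℕ} (A : Matrix (Fin m) (Fin n) ℝ) (I : Finset (Fin m)) :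
    Matrix (Fin n) (Fin n) ℝ := (rowSub A I)ᵀ * rowSub A I

lemma quad_le {n : ℕ} {M : Matrix (Fin n) (Fin n) ℝ} (hM : M.IsHermitian)
    (v : EuclideanSpace ℝ (Fin n)) :
    dotProduct (v : Fin n → ℝ) (M.mulVec v) ≤ lambdaMax hM * ‖v‖ ^ 2 := by
  have hsym := (Matrix.isHermitian_iff_isSymmetric).1 hM
  set T := Matrix.toEuclideanLin M with hT
  have hdot : dotProduct (v : Fin n → ℝ) (M.mulVec v) = inner ℝ v (T v) := by
    simp only [hT, PiLp.inner_apply, RCLike.inner_apply, dotProduct, conj_trivial]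
    refine Finset.sum_congr rfl fun j _ => ?_
    rw [mul_comm]; rfl
  set B := hM.eigenvectorBasis with hB
  have hTB : ∀ j, T (B j) = hM.eigenvalues j • B j := by
    intro j
    have h := hM.mulVec_eigenvectorBasis j
    apply (WithLp.equiv 2 (Fin n → ℝ)).injective
    simpa [hT, Matrix.toEuclideanLin_apply] using h
  have expand : inner ℝ v (T v) = ∑ j, hM.eigenvalues j * (inner ℝ (B j) v : ℝ) ^ 2 := by
    rw [← B.sum_inner_mul_inner v (T v)]
    congr 1
    ext j
    have : (inner ℝ (B j) (T v) : ℝ) = hM.eigenvalues j * inner ℝ (B j) v := by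
      rw [← hsym (B j) v, hTB j, inner_smul_left]
      simp
    rw [this, real_inner_comm v (B j)]
    ring
  have hbdd : BddAbove (Set.range hM.eigenvalues) := (Set.finite_range _).bddAbove
  have hle : ∀ j, hM.eigenvalues j ≤ lambdaMax hM := fun j => le_ciSup hbdd j
  have parseval : ∑ j, (inner ℝ (B j) v : ℝ) ^ 2 = ‖v‖ ^ 2 := by
    have h := B.sum_inner_mul_inner v v
    rw [real_inner_self_eq_norm_sq] at h
    rw [← h]
    congr 1; ext j; rw [real_inner_comm v (B j)]; ring
  calc dotProduct (v : Fin n → ℝ) (M.mulVec v)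
      = ∑ j, hM.eigenvalues j * (inner ℝ (B j) v : ℝ) ^ 2 := by rw [hdot, expand]
    _ ≤ ∑ j, lambdaMax hM * (inner ℝ (B j) v : ℝ) ^ 2 :=
        Finset.sum_le_sum fun j _ => mul_le_mul_of_nonneg_right (hle j) (sq_nonneg _)
    _ = lambdaMax hM * ‖v‖ ^ 2 := by rw [← Finset.mul_sum, parseval]

lemma gram_quad {m n : ℕ} (A : Matrix (Fin m) (Fin n) ℝ) (I : Finset (Fin m))
    (w : Fin n → ℝ) :
    dotProduct w ((gram A I).mulVec w) = ∑ i : {i // i ∈ I}, (A.mulVec w i.1) ^ 2 := by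
  have hrow : ∀ i : {i // i ∈ I}, (rowSub A I).mulVec w i = A.mulVec w i.1 := by
    intro i; simp [rowSub, Matrix.mulVec, Matrix.submatrix, dotProduct]
  rw [_root_.gram, ← Matrix.mulVec_mulVec, Matrix.dotProduct_mulVec, Matrix.vecMul_transpose]
  simp only [dotProduct, hrow]
  congr 1; ext i; ring

/-- One BSKM1 step: with `δ = max_{j∈τ} (b_j − A_j x)²` attained at `t ∈ τ`, and
`I = {h ∉ τ : (b_h − A_h x)² ≥ δ} ∪ {t}`, if `A_I ≠ 0` and `x₊` is the orthogonal
projection of `x` onto `S_I = {y : A_I y = b_I}`, then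
`‖x₊ − x⋆‖² ≤ ‖x − x⋆‖² − |I|·δ / λ_max(A_Iᵀ A_I)`. -/
theorem bskm1_step
    {m n : ℕ} (A : Matrix (Fin m) (Fin n) ℝ) (b : Fin m → ℝ)
    (xs : EuclideanSpace ℝ (Fin n)) (hxs : A.mulVec xs = b)
    (x : EuclideanSpace ℝ (Fin n))
    (τ : Finset (Fin m)) (hτ : τ.Nonempty)
    (δ : ℝ) (hδ : δ = τ.sup' hτ fun j => (b j - A.mulVec x j) ^ 2)
    (t : Fin m) (htτ : t ∈ τ) (ht : (b t - A.mulVec x t) ^ 2 = δ)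
    (I : Finset (Fin m))
    (hI : I = (Finset.univ \ τ).filter (fun h => (b h - A.mulVec x h) ^ 2 ≥ δ) ∪ {t})
    (hAI : rowSub A I ≠ 0)
    (hG : (gram A I).IsHermitian)
    (xp : EuclideanSpace ℝ (Fin n))
    (hmem : ∀ i ∈ I, A.mulVec xp i = b i)
    (hmin : ∀ y : EuclideanSpace ℝ (Fin n),
      (∀ i ∈ I, A.mulVec y i = b i) → ‖x - xp‖ ≤ ‖x - y‖) :
    ‖xp - xs‖ ^ 2 ≤ ‖x - xs‖ ^ 2 - (I.card : ℝ) * δ / lambdaMax hG := by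
  -- residual bound on I
  have hres : ∀ i ∈ I, δ ≤ (b i - A.mulVec x i) ^ 2 := by
    intro i hi
    rw [hI] at hi
    rcases Finset.mem_union.1 hi with h | h
    · exact (Finset.mem_filter.1 h).2
    · rw [Finset.mem_singleton.1 h]; exact ht.ge
  -- orthogonality of x - xp and xs - xp
  have hc : (inner ℝ (x - xp) (xs - xp) : ℝ) = 0 := by
    set v := xs - xp with hv
    set c : ℝ := inner ℝ (x - xp) v with hcdef
    set q : ℝ := ‖v‖ ^ 2 with hq
    have hq0 : 0 ≤ q := sq_nonneg _
    have key : ∀ s : ℝ, 0 ≤ s ^ 2 * q - 2 * (s * c) := by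
      intro s
      have hmemy : ∀ i ∈ I, A.mulVec (xp + s • v) i = b i := by
        intro i hi
        have h1 : A.mulVec xs i = b i := by rw [hxs]
        have h2 := hmem i hi
        have h3 : A.mulVec (xp + s • v) i
            = A.mulVec xp i + s * (A.mulVec xs i - A.mulVec xp i) := by
          simp only [Matrix.mulVec, dotProduct]
          have e : ∀ j, A i j * (xp.ofLp + s • v.ofLp) j
              = A i j * xp j + s * (A i j * xs j - A i j * xp j) := by
            intro j
            have e1 : (xp.ofLp + s • v.ofLp) j = xp j + s * (xs j - xp j) := rfl
            rw [e1]; ring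
          rw [Finset.sum_congr rfl fun j _ => e j, Finset.sum_add_distrib,
            ← Finset.mul_sum, Finset.sum_sub_distrib]
        rw [h3, h1, h2]; ring
      have h := hmin _ hmemy
      have h2 : ‖x - xp‖ ^ 2 ≤ ‖x - (xp + s • v)‖ ^ 2 :=
        pow_le_pow_left₀ (norm_nonneg _) h 2
      rw [sub_add_eq_sub_sub, norm_sub_sq_real (x - xp) (s • v), real_inner_smul_right, norm_smul] at h2
      have habs : (‖s‖ * ‖v‖) ^ 2 = s ^ 2 * q := by
        rw [mul_pow, hq, Real.norm_eq_abs, sq_abs]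
      rw [habs] at h2
      linarith
    have h1 := key (c / (q + 1))
    have hq1 : 0 < q + 1 := by linarith
    have e : (c / (q + 1)) ^ 2 * q - 2 * (c / (q + 1) * c)
        = (c ^ 2 * q - 2 * c ^ 2 * (q + 1)) / (q + 1) ^ 2 := by
      field_simp
    rw [e] at h1
    have h2 : (0:ℝ) * (q + 1) ^ 2 ≤ c ^ 2 * q - 2 * c ^ 2 * (q + 1) :=
      (le_div_iff₀ (pow_pos hq1 2)).mp h1
    have hc2 : c ^ 2 ≤ 0 := by nlinarith [mul_nonneg (sq_nonneg c) hq0]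
    have : c = 0 := by
      have := le_antisymm hc2 (sq_nonneg c)
      exact (pow_eq_zero_iff two_ne_zero).mp this
    simpa [hcdef] using this
  -- Pythagoras
  have hpyth : ‖xp - xs‖ ^ 2 = ‖x - xs‖ ^ 2 - ‖x - xp‖ ^ 2 := by
    have h3 : x - xs = (x - xp) - (xs - xp) := by abel
    have h4 := norm_sub_sq_real (x - xp) (xs - xp)
    rw [hc] at h4
    rw [h3, h4, norm_sub_rev xs xp]
    ring
  -- quadratic form equals residual sum
  have hterm : ∀ i : {i // i ∈ I},
      (A.mulVec (⇑(x - xp)) i.1) ^ 2 = (b i.1 - A.mulVec x i.1) ^ 2 := by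
    intro i
    have h3 : A.mulVec (⇑(x - xp)) i.1 = A.mulVec x i.1 - A.mulVec xp i.1 := by
      simp only [Matrix.mulVec, dotProduct]
      rw [← Finset.sum_sub_distrib]
      refine Finset.sum_congr rfl fun j _ => ?_
      have e : (x - xp) j = x j - xp j := rfl
      rw [e]; ring
    rw [h3, hmem i.1 i.2]; ring
  have hsum : dotProduct (⇑(x - xp)) ((gram A I).mulVec ⇑(x - xp))
      = ∑ i ∈ I, (b i - A.mulVec x i) ^ 2 := by
    rw [gram_quad]
    rw [← Finset.sum_coe_sort I (fun i => (b i - A.mulVec x i) ^ 2)]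
    exact Finset.sum_congr rfl fun i _ => hterm i
  -- lower bound on the residual sum
  have hlow : (I.card : ℝ) * δ ≤ ∑ i ∈ I, (b i - A.mulVec x i) ^ 2 := by
    have := Finset.card_nsmul_le_sum I (fun i => (b i - A.mulVec x i) ^ 2) δ hres
    simpa [nsmul_eq_mul] using this
  -- positivity of lambdaMax
  obtain ⟨i0, j0, hij⟩ : ∃ i j, rowSub A I i j ≠ 0 := by
    by_contra h
    push_neg at h
    exact hAI (by ext i j; simpa using h i j)
  have hpos : 0 < lambdaMax hG := by
    have h1 := quad_le hG (EuclideanSpace.single j0 (1:ℝ))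
    rw [gram_quad, EuclideanSpace.norm_single] at h1
    have h3 : ∑ i : {i // i ∈ I},
        (A.mulVec ((EuclideanSpace.single j0 (1:ℝ)) : Fin n → ℝ) i.1) ^ 2
        = ∑ i : {i // i ∈ I}, (A i.1 j0) ^ 2 := by
      refine Finset.sum_congr rfl fun i _ => ?_
      congr 1
      simp [Matrix.mulVec, dotProduct,
        EuclideanSpace.single_apply, mul_ite]
    rw [h3] at h1
    have h4 : (A i0.1 j0) ^ 2 ≤ ∑ i : {i // i ∈ I}, (A i.1 j0) ^ 2 :=
      Finset.single_le_sum (f := fun i : {i // i ∈ I} => (A i.1 j0) ^ 2)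
        (fun i _ => sq_nonneg _) (Finset.mem_univ i0)
    have h5 : 0 < (A i0.1 j0) ^ 2 := by
      have : A i0.1 j0 ≠ 0 := by simpa [rowSub, Matrix.submatrix] using hij
      positivity
    have h6 : 0 < lambdaMax hG * ‖(1:ℝ)‖ ^ 2 := lt_of_lt_of_le (lt_of_lt_of_le h5 h4) h1
    simpa using h6
  -- the Kaczmarz bound
  have hchain : (I.card : ℝ) * δ ≤ lambdaMax hG * ‖x - xp‖ ^ 2 := by
    calc (I.card : ℝ) * δ ≤ ∑ i ∈ I, (b i - A.mulVec x i) ^ 2 := hlow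
      _ = dotProduct (⇑(x - xp)) ((gram A I).mulVec ⇑(x - xp)) := hsum.symm
      _ ≤ lambdaMax hG * ‖x - xp‖ ^ 2 := quad_le hG (x - xp)
  have hdiv : (I.card : ℝ) * δ / lambdaMax hG ≤ ‖x - xp‖ ^ 2 := by
    rw [div_le_iff₀ hpos]
    linarith [hchain, mul_comm (lambdaMax hG) (‖x - xp‖ ^ 2)]
  rw [hpyth]
  linarith
end

section
/- (One BSKM2 step, intermediate bound.) Let A ∈ ℝ^{m×n}, b ∈ ℝ^m, A x_⋆ = b, and x ∈ ℝ^n. Let τ_1,…,τ_η be pairwise disjoint nonempty subsets of {1,…,m}; for each j let t_j ∈ τ_j attain max_{i∈τ_j}(b_i − A_i x)², and set J = {t_1,…,t_η}. If A_J ≠ 0 and x₊ = P_{S_J}(x) is the orthogonal projection of x onto S_J = {y : A_J y = b_J}, then ‖x₊ − x_⋆‖₂² ≤ ‖x − x_⋆‖₂² − (Σ_{j=1}^{η} max_{i∈τ_j}(b_i − A_i x)²) / λ_max(A_Jᵀ A_J). -/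
open Matrix Finset

lemma rayleigh_bound {n : ℕ} [Nonempty (Fin n)] {M : Matrix (Fin n) (Fin n) ℝ}
    (hM : M.IsHermitian) (z : EuclideanSpace ℝ (Fin n)) :
    (z : Fin n → ℝ) ⬝ᵥ M.mulVec z ≤ lambdaMax hM * ‖z‖ ^ 2 := by
  have hsym := (Matrix.isHermitian_iff_isSymmetric.mp hM)
  set B := hM.eigenvectorBasis with hB
  set T := Matrix.toEuclideanLin M with hT
  have hTB : ∀ i, T (B i) = hM.eigenvalues i • B i := by
    intro i
    have h := hM.mulVec_eigenvectorBasis i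
    ext j
    simp [hT, Matrix.toEuclideanLin_apply, hB, h]
  have hdot : (z : Fin n → ℝ) ⬝ᵥ M.mulVec z = (inner ℝ z (T z) : ℝ) := by
    simp [hT, Matrix.toEuclideanLin_apply, PiLp.inner_apply, dotProduct]
    exact Finset.sum_congr rfl fun k _ => mul_comm _ _
  have hexp : (inner ℝ z (T z) : ℝ) = ∑ i, hM.eigenvalues i * (inner ℝ (B i) z : ℝ) ^ 2 := by
    rw [← B.sum_inner_mul_inner z (T z)]
    refine Finset.sum_congr rfl fun i _ => ?_
    have : (inner ℝ (B i) (T z) : ℝ) = inner ℝ (T (B i)) z := (hsym (B i) z).symm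
    rw [this, hTB i, real_inner_smul_left, real_inner_comm z (B i)]
    ring
  have hnorm : ‖z‖ ^ 2 = ∑ i, (inner ℝ (B i) z : ℝ) ^ 2 := by
    rw [← real_inner_self_eq_norm_sq, ← B.sum_inner_mul_inner z z]
    refine Finset.sum_congr rfl fun i _ => ?_
    rw [real_inner_comm z (B i)]; ring
  rw [hdot, hexp, hnorm, Finset.mul_sum]
  refine Finset.sum_le_sum fun i _ => ?_
  have hle : hM.eigenvalues i ≤ lambdaMax hM :=
    le_ciSup (Set.Finite.bddAbove (Set.finite_range _)) i
  exact mul_le_mul_of_nonneg_right hle (sq_nonneg _)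

lemma gram_dot {m n : ℕ} (A : Matrix (Fin m) (Fin n) ℝ) (I : Finset (Fin m)) (v : Fin n → ℝ) :
    v ⬝ᵥ (gram A I).mulVec v = ((rowSub A I).mulVec v) ⬝ᵥ ((rowSub A I).mulVec v) := by
  rw [_root_.gram, ← Matrix.mulVec_mulVec, Matrix.dotProduct_mulVec, Matrix.vecMul_transpose]

lemma eig_nonneg {m n : ℕ} (A : Matrix (Fin m) (Fin n) ℝ) (I : Finset (Fin m))
    (hG : (gram A I).IsHermitian) (i : Fin n) : 0 ≤ hG.eigenvalues i := by
  rw [hG.eigenvalues_eq]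
  simp only [RCLike.star_def, starRingEnd_apply]
  rw [show star ⇑(hG.eigenvectorBasis i) = ⇑(hG.eigenvectorBasis i) from rfl]
  rw [gram_dot]
  exact Finset.sum_nonneg fun k _ => mul_self_nonneg _

lemma lambdaMax_pos {m n : ℕ} (A : Matrix (Fin m) (Fin n) ℝ) (I : Finset (Fin m))
    (hAJ : rowSub A I ≠ 0) (hG : (gram A I).IsHermitian) : 0 < lambdaMax hG := by
  have hgram : gram A I ≠ 0 := by
    intro h
    apply hAJ
    ext i k
    have hk : gram A I k k = 0 := by rw [h]; rfl
    have : ∑ j, rowSub A I j k * rowSub A I j k = 0 := by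
      simpa [_root_.gram, Matrix.mul_apply, Matrix.transpose_apply] using hk
    have := (Finset.sum_eq_zero_iff_of_nonneg (fun j _ => mul_self_nonneg _)).mp this
      i (Finset.mem_univ i)
    simpa using mul_self_eq_zero.mp this
  have hne : hG.eigenvalues ≠ 0 := by
    intro h
    apply hgram
    have := hG.spectral_theorem
    rwa [h, Pi.comp_zero, RCLike.ofReal_zero,
      (by rfl : Function.const (Fin n) (0 : ℝ) = fun _ ↦ 0),
      Matrix.diagonal_zero, map_zero] at this
  obtain ⟨i, hi⟩ := Function.ne_iff.mp hne
  have hpos : 0 < hG.eigenvalues i := lt_of_le_of_ne (eig_nonneg A I hG i) (Ne.symm hi)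
  exact lt_of_lt_of_le hpos (le_ciSup (Set.Finite.bddAbove (Set.finite_range _)) i)

/-- One BSKM2 step (intermediate bound): with pairwise disjoint nonempty samples
`τ_1, …, τ_η`, `t_j ∈ τ_j` attaining `max_{i∈τ_j}(b_i − A_i x)²`, and
`J = {t_1, …, t_η}`, if `A_J ≠ 0` and `x₊` is the orthogonal projection of `x` onto
`S_J = {y : A_J y = b_J}`, then
`‖x₊ − x⋆‖² ≤ ‖x − x⋆‖² − (Σ_j max_{i∈τ_j}(b_i − A_i x)²)/λ_max(A_Jᵀ A_J)`. -/
theorem bskm2_step_intermediate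
    {m n η : ℕ} (A : Matrix (Fin m) (Fin n) ℝ) (b : Fin m → ℝ)
    (xs : EuclideanSpace ℝ (Fin n)) (hxs : A.mulVec xs = b)
    (x : EuclideanSpace ℝ (Fin n))
    (τ : Fin η → Finset (Fin m))
    (hne : ∀ j, (τ j).Nonempty)
    (hdisj : ∀ j₁ j₂, j₁ ≠ j₂ → Disjoint (τ j₁) (τ j₂))
    (t : Fin η → Fin m)
    (ht_mem : ∀ j, t j ∈ τ j)
    (ht_max : ∀ j, (b (t j) - A.mulVec x (t j)) ^ 2 =
      (τ j).sup' (hne j) fun i => (b i - A.mulVec x i) ^ 2)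
    (J : Finset (Fin m)) (hJ : J = Finset.image t Finset.univ)
    (hAJ : rowSub A J ≠ 0)
    (hG : (gram A J).IsHermitian)
    (xp : EuclideanSpace ℝ (Fin n))
    (hp_mem : ∀ i ∈ J, A.mulVec xp i = b i)
    (hp_min : ∀ y : EuclideanSpace ℝ (Fin n),
      (∀ i ∈ J, A.mulVec y i = b i) → ‖x - xp‖ ≤ ‖x - y‖) :
    ‖xp - xs‖ ^ 2 ≤ ‖x - xs‖ ^ 2 -
      (∑ j, (τ j).sup' (hne j) fun i => (b i - A.mulVec x i) ^ 2) / lambdaMax hG := by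
  have hn : Nonempty (Fin n) := by
    by_contra h
    apply hAJ
    ext i k
    exact absurd ⟨k⟩ h
  -- pointwise linearity of mulVec on EuclideanSpace elements
  have hmv_sub : ∀ (u v : EuclideanSpace ℝ (Fin n)) (i : Fin m),
      A.mulVec ((u - v : EuclideanSpace ℝ (Fin n))) i = A.mulVec u i - A.mulVec v i := by
    intro u v i
    simp [Matrix.mulVec, dotProduct, mul_sub, Finset.sum_sub_distrib]
  have hmv_add : ∀ (u v : EuclideanSpace ℝ (Fin n)) (i : Fin m),
      A.mulVec ((u + v : EuclideanSpace ℝ (Fin n))) i = A.mulVec u i + A.mulVec v i := by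
    intro u v i
    simp [Matrix.mulVec, dotProduct, mul_add, Finset.sum_add_distrib]
  have hmv_smul : ∀ (c : ℝ) (v : EuclideanSpace ℝ (Fin n)) (i : Fin m),
      A.mulVec ((c • v : EuclideanSpace ℝ (Fin n))) i = c * A.mulVec v i := by
    intro c v i
    simp only [Matrix.mulVec, dotProduct, Finset.mul_sum,
      show ∀ k, (c • v) k = c * v k from fun k => rfl]
    exact Finset.sum_congr rfl fun k _ => by ring
  set z : EuclideanSpace ℝ (Fin n) := xp - xs with hzdef
  have hz0 : ∀ i ∈ J, A.mulVec z i = 0 := by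
    intro i hi
    rw [hzdef, hmv_sub, hp_mem i hi, hxs]
    simp
  -- orthogonality
  have horth : (inner ℝ (x - xp) z : ℝ) = 0 := by
    by_cases hzz : z = 0
    · simp [hzz]
    · set c : ℝ := inner ℝ (x - xp) z with hc
      have key : ∀ ε : ℝ, ‖x - xp‖ ^ 2 ≤ ‖x - xp‖ ^ 2 - 2 * (ε * c) + ε ^ 2 * ‖z‖ ^ 2 := by
        intro ε
        have hy : ∀ i ∈ J, A.mulVec ((xp + ε • z : EuclideanSpace ℝ (Fin n))) i = b i := by
          intro i hi
          rw [hmv_add, hmv_smul, hz0 i hi, hp_mem i hi]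
          ring
        have h1 := hp_min (xp + ε • z) hy
        have h2 : ‖x - xp‖ ^ 2 ≤ ‖x - (xp + ε • z)‖ ^ 2 :=
          pow_le_pow_left₀ (norm_nonneg _) h1 2
        have h3 : x - (xp + ε • z) = (x - xp) - ε • z := by
          module
        rw [h3] at h2
        have hnorm2 := norm_sub_sq_real (x - xp) (ε • z)
        rw [real_inner_smul_right, norm_smul, Real.norm_eq_abs] at hnorm2
        have habs : (|ε| * ‖z‖) ^ 2 = ε ^ 2 * ‖z‖ ^ 2 := by
          rw [mul_pow, sq_abs]
        rw [habs, ← hc] at hnorm2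
        linarith [h2, hnorm2]
      have hzpos : (0 : ℝ) < ‖z‖ ^ 2 := by
        have := norm_pos_iff.mpr hzz
        positivity
      have hkey := key (c / ‖z‖ ^ 2)
      have hle0 : c ^ 2 / ‖z‖ ^ 2 ≤ 0 := by
        have expand : (c / ‖z‖ ^ 2) ^ 2 * ‖z‖ ^ 2 = c ^ 2 / ‖z‖ ^ 2 := by
          field_simp
        have h4 : c / ‖z‖ ^ 2 * c = c ^ 2 / ‖z‖ ^ 2 := by
          field_simp
        linarith [hkey, expand, h4]
      have hc2 : c ^ 2 ≤ 0 := by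
        by_contra hpos
        push_neg at hpos
        have hgt0 : 0 < c ^ 2 / ‖z‖ ^ 2 := div_pos hpos hzpos
        linarith
      have : c ^ 2 = 0 := le_antisymm hc2 (sq_nonneg c)
      exact pow_eq_zero_iff (by norm_num) |>.mp this
  -- Pythagoras
  have hpyth : ‖x - xs‖ ^ 2 = ‖x - xp‖ ^ 2 + ‖xp - xs‖ ^ 2 := by
    have hsplit : x - xs = (x - xp) + (xp - xs) := by abel
    rw [hsplit, norm_add_sq_real, ← hzdef, horth]
    ring
  -- the sum S
  set S : ℝ := ∑ j, (τ j).sup' (hne j) fun i => (b i - A.mulVec x i) ^ 2 with hSdef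
  have htinj : ∀ j₁ ∈ (Finset.univ : Finset (Fin η)), ∀ j₂ ∈ Finset.univ,
      t j₁ = t j₂ → j₁ = j₂ := by
    intro j₁ _ j₂ _ h
    by_contra hnejj
    exact (Finset.disjoint_left.mp (hdisj j₁ j₂ hnejj)) (ht_mem j₁) (h ▸ ht_mem j₂)
  have hS : S = ∑ i ∈ J, (b i - A.mulVec x i) ^ 2 := by
    rw [hSdef, hJ, Finset.sum_image htinj]
    exact Finset.sum_congr rfl fun j _ => (ht_max j).symm
  -- connect to gram quadratic form
  set w : EuclideanSpace ℝ (Fin n) := x - xp with hwdef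
  have hquad : S = (w : Fin n → ℝ) ⬝ᵥ (gram A J).mulVec w := by
    rw [hS, gram_dot, dotProduct]
    rw [← Finset.sum_coe_sort J (fun i => (b i - A.mulVec x i) ^ 2)]
    refine Finset.sum_congr rfl fun i _ => ?_
    have hmv : (rowSub A J).mulVec w i = A.mulVec x i.1 - A.mulVec xp i.1 := by
      rw [hwdef, ← hmv_sub]
      rfl
    rw [hmv, hp_mem i.1 i.2]
    ring
  have hray := rayleigh_bound hG w
  have hL : 0 < lambdaMax hG := lambdaMax_pos A J hAJ hG
  have hSle : S ≤ lambdaMax hG * ‖w‖ ^ 2 := hquad ▸ hray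
  have hdiv : S / lambdaMax hG ≤ ‖w‖ ^ 2 := by
    rw [div_le_iff₀ hL]
    linarith [hSle]
  rw [hwdef] at hdiv
  linarith [hpyth, hdiv]
end
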